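/- arXiv:2511.14277 — 3 statements merged into one kernel-verified Lean document; each statement's English description precedes it below -/
import Mathlib

section
/- Let G be a group and let A = [G,G] ∩ Z(G) be the intersection of the derived (commutator) subgroup of G with the center of G. Suppose S ⊆ G \ A and B ⊆ A are subsets such that S ∪ B generates G. Then S generates G. -/
/-!
Let `H = ⟨S⟩`. Since `B` is central, `G = ⟨S ∪ B⟩ = H·Z(G)`, and central factors drop out of
commutators, so `[G,G] = [H,H] ≤ H`. Hence `B ⊆ [G,G] ≤ H`, and `G = ⟨S ∪ B⟩ ≤ H`.
-/

open Subgroup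

open scoped commutatorElement

section

variable {G : Type*} [Group G]

theorem commutatorElement_mul_left_of_mem_center {z : G} (hz : z ∈ center G) (a b : G) :
    ⁅a * z, b⁆ = ⁅a, b⁆ := by
  have hzb : ⁅z, b⁆ = 1 :=
    commutatorElement_eq_one_iff_mul_comm.mpr (mem_center_iff.mp hz b).symm
  rw [commutatorElement_mul_left_eq_conj_mul, hzb, mul_one, mul_inv_cancel, one_mul]

theorem commutatorElement_mul_right_of_mem_center {z : G} (hz : z ∈ center G) (a b : G) :
    ⁅a, b * z⁆ = ⁅a, b⁆ := by
  rw [← commutatorElement_inv, commutatorElement_mul_left_of_mem_center hz,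
    commutatorElement_inv]

theorem commutator_le_of_sup_center_eq_top {H : Subgroup G} (hH : H ⊔ center G = ⊤) :
    commutator G ≤ H := by
  rw [commutator_def, commutator_le]
  intro g₁ _ g₂ _
  obtain ⟨h₁, hh₁, z₁, hz₁, rfl⟩ := mem_sup_of_normal_right.mp (hH ▸ mem_top g₁)
  obtain ⟨h₂, hh₂, z₂, hz₂, rfl⟩ := mem_sup_of_normal_right.mp (hH ▸ mem_top g₂)
  rw [commutatorElement_mul_left_of_mem_center hz₁,
    commutatorElement_mul_right_of_mem_center hz₂, commutatorElement_def]
  exact H.mul_mem (H.mul_mem (H.mul_mem hh₁ hh₂) (H.inv_mem hh₁)) (H.inv_mem hh₂)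

theorem closure_sup_center_eq_top_of_closure_union {S B : Set G} (hB : B ⊆ center G)
    (hgen : closure (S ∪ B) = ⊤) : closure S ⊔ center G = ⊤ := by
  rw [eq_top_iff, ← hgen, Subgroup.closure_union]
  exact sup_le_sup_left ((closure_le _).mpr hB) _

end

theorem closure_eq_top_of_union_central_commutators_general
    {G : Type*} [Group G] (S B : Set G)
    (hB : B ⊆ (↑(commutator G ⊓ Subgroup.center G) : Set G))
    (hgen : Subgroup.closure (S ∪ B) = ⊤) :
    Subgroup.closure S = ⊤ := by
  have hSZ : closure S ⊔ center G = ⊤ :=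
    closure_sup_center_eq_top_of_closure_union (fun b hb ↦ (hB hb).2) hgen
  have hBS : B ⊆ closure S := fun b hb ↦ commutator_le_of_sup_center_eq_top hSZ (hB hb).1
  rw [eq_top_iff, ← hgen, closure_le]
  exact Set.union_subset subset_closure hBS

/-- Central commutators are non-generators: let
`A = [G,G] ⊓ Z(G)`.  If `S ⊆ G \ A` and `B ⊆ A` are such that `S ∪ B`
generates `G`, then `S` already generates `G`. -/
theorem closure_eq_top_of_union_central_commutators
    {G : Type*} [Group G] (S B : Set G)
    (hS : S ⊆ (↑(commutator G ⊓ Subgroup.center G) : Set G)ᶜ)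
    (hB : B ⊆ (↑(commutator G ⊓ Subgroup.center G) : Set G))
    (hgen : Subgroup.closure (S ∪ B) = ⊤) :
    Subgroup.closure S = ⊤ :=
  closure_eq_top_of_union_central_commutators_general S B hB hgen
end

section
/- Let E be a group and N a normal subgroup of E with N contained in both the center Z(E) and the derived subgroup [E,E] of E. If the quotient group E/N is generated by a set S, then E is generated by a set of cardinality at most that of S. -/
/-!
Lifting a generating set of `E ⧸ N` elementwise gives a subgroup `H` of `E` with `H ⊔ N = ⊤`.
As `N` is central, every element of `E` is `h * n` with `h ∈ H`, `n ∈ N`, and `n` drops out of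
commutators; so `[E, E] ≤ H`, whence `N ≤ H` and `H = E`.
-/

universe u v

open scoped commutatorElement

namespace Subgroup

variable {G : Type*} [Group G]

theorem normal_of_le_center {N : Subgroup G} (hN : N ≤ center G) : N.Normal :=
  ⟨fun n hn g => by rwa [mem_center_iff.mp (hN hn) g, mul_inv_cancel_right]⟩

theorem commutatorElement_mul_left_of_mem_center {z : G} (hz : z ∈ center G) (a b : G) :
    ⁅a * z, b⁆ = ⁅a, b⁆ := by
  rw [commutatorElement_def, commutatorElement_def, mul_inv_rev, mul_assoc a z b,
    ← mem_center_iff.mp hz b]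
  group

theorem commutatorElement_mul_right_of_mem_center {z : G} (hz : z ∈ center G) (a b : G) :
    ⁅a, b * z⁆ = ⁅a, b⁆ := by
  rw [← commutatorElement_inv, commutatorElement_mul_left_of_mem_center hz, commutatorElement_inv]

theorem commutator_le_of_sup_eq_top {H N : Subgroup G} (hN : N ≤ center G) (hHN : H ⊔ N = ⊤) :
    _root_.commutator G ≤ H := by
  have := normal_of_le_center hN
  rw [_root_.commutator_def, commutator_le]
  intro x _ y _
  obtain ⟨h, hh, n, hn, rfl⟩ := mem_sup_of_normal_right.mp (hHN ▸ mem_top x)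
  obtain ⟨k, hk, m, hm, rfl⟩ := mem_sup_of_normal_right.mp (hHN ▸ mem_top y)
  rw [commutatorElement_mul_left_of_mem_center (hN hn),
    commutatorElement_mul_right_of_mem_center (hN hm), commutatorElement_def]
  exact H.mul_mem (H.mul_mem (H.mul_mem hh hk) (H.inv_mem hh)) (H.inv_mem hk)

theorem eq_top_of_sup_eq_top_of_le_center_inf_commutator {H N : Subgroup G}
    (hN : N ≤ center G ⊓ _root_.commutator G) (hHN : H ⊔ N = ⊤) : H = ⊤ := by
  rw [← hHN, left_eq_sup]
  exact fun n hn => commutator_le_of_sup_eq_top (fun n hn => (hN hn).1) hHN (hN hn).2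

end Subgroup

theorem MonoidHom.exists_lift_mk_le_closure_sup_ker_eq_top {G : Type u} {Q : Type v} [Group G]
    [Group Q] {f : G →* Q} (hf : Function.Surjective f) {S : Set Q}
    (hS : Subgroup.closure S = ⊤) :
    ∃ T : Set G, Cardinal.lift.{v} (Cardinal.mk T) ≤ Cardinal.lift.{u} (Cardinal.mk S) ∧
      Subgroup.closure T ⊔ f.ker = ⊤ := by
  refine ⟨Function.surjInv hf '' S, Cardinal.mk_image_le_lift, ?_⟩
  rw [← Subgroup.comap_map_eq, MonoidHom.map_closure,
    (Function.rightInverse_surjInv hf).image_image, hS, Subgroup.comap_top]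

/-- If `N` is a normal subgroup of `E` contained in both the
center `Z(E)` and the derived subgroup `[E,E]`, and the quotient `E ⧸ N` is
generated by a set `S`, then `E` is generated by a set of cardinality at most
that of `S`. -/
theorem stem_extension_generated_by_same_cardinality
    {E : Type*} [Group E] (N : Subgroup E) [N.Normal]
    (hN : N ≤ Subgroup.center E ⊓ commutator E)
    (S : Set (E ⧸ N)) (hS : Subgroup.closure S = ⊤) :
    ∃ T : Set E, Cardinal.mk T ≤ Cardinal.mk S ∧ Subgroup.closure T = ⊤ := by
  obtain ⟨T, hTS, hTN⟩ :=
    MonoidHom.exists_lift_mk_le_closure_sup_ker_eq_top (QuotientGroup.mk'_surjective N) hS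
  rw [QuotientGroup.ker_mk'] at hTN
  exact ⟨T, Cardinal.lift_le.mp hTS,
    Subgroup.eq_top_of_sup_eq_top_of_le_center_inf_commutator hN hTN⟩
end

section
/- Let G be a finitely generated group and let 𝒮 be a set of normal subgroups of G. Then 𝒮 is uncountable if and only if the quotient of 𝒮 by the equivalence relation N ~ M ⟺ G/N ≅ G/M (isomorphism of quotient groups) is uncountable; that is, 𝒮 is uncountable if and only if the quotient groups G/N for N ∈ 𝒮 represent uncountably many isomorphism classes of groups. -/
/-- The quotients of `G` by the normal subgroups `N` and `M` are isomorphic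
as groups. -/
def QuotientsIsomorphic {G : Type*} [Group G] (N M : Subgroup G)
    (hN : N.Normal) (hM : M.Normal) : Prop :=
  letI := hN
  letI := hM
  Nonempty ((G ⧸ N) ≃* (G ⧸ M))

/-- Let `G` be a finitely generated group and `𝒮` a set of
normal subgroups of `G`.  Then `𝒮` is uncountable if and only if the quotient
of `𝒮` by the relation `N ~ M ↔ G ⧸ N ≅ G ⧸ M` is uncountable, i.e. the
quotients `G ⧸ N` for `N ∈ 𝒮` represent uncountably many isomorphism classes. -/
theorem uncountable_iff_uncountably_many_quotient_iso_classes
    {G : Type*} [Group G] (hG : Group.FG G)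
    (𝒮 : Set (Subgroup G)) (hnorm : ∀ N ∈ 𝒮, N.Normal) :
    Uncountable 𝒮 ↔
      Uncountable (Quot fun (N M : 𝒮) =>
        QuotientsIsomorphic N.1 M.1 (hnorm N.1 N.2) (hnorm M.1 M.2)) := by
  classical
  set r : 𝒮 → 𝒮 → Prop := fun N M =>
    QuotientsIsomorphic N.1 M.1 (hnorm N.1 N.2) (hnorm M.1 M.2) with hr
  haveI : Countable G := by
    obtain ⟨S, hSc, hSf⟩ := Group.fg_iff.mp hG
    haveI := hSf.to_subtype
    haveI : Countable (FreeGroup S) := Quotient.countable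
    have hsurj : Function.Surjective (FreeGroup.lift (Subtype.val : S → G)) := by
      rw [← MonoidHom.range_eq_top, FreeGroup.range_lift_eq_closure, Subtype.range_val]
      exact hSc
    exact hsurj.countable
  obtain ⟨T, hTc, hTf⟩ := Group.fg_iff.mp hG
  haveI := hTf.to_subtype
  have hequiv : Equivalence r := by
    constructor
    · rintro ⟨N, hN⟩
      letI := hnorm N hN
      exact ⟨MulEquiv.refl _⟩
    · rintro ⟨N, hN⟩ ⟨M, hM⟩ ⟨e⟩
      letI := hnorm N hN; letI := hnorm M hM
      exact ⟨e.symm⟩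
    · rintro ⟨N, hN⟩ ⟨M, hM⟩ ⟨P, hP⟩ ⟨e⟩ ⟨f⟩
      letI := hnorm N hN; letI := hnorm M hM; letI := hnorm P hP
      exact ⟨e.trans f⟩
  constructor
  · intro h
    rw [← not_countable_iff]
    intro hq
    apply (not_countable_iff.mpr h)
    haveI : ∀ q : Quot r, Countable {N : 𝒮 // Quot.mk r N = q} := by
      intro q
      obtain ⟨N0, rfl⟩ := Quot.exists_rep q
      letI : (N0.1).Normal := hnorm N0.1 N0.2
      -- maps into homs G →* G ⧸ N0.1
      haveI : Countable (G ⧸ N0.1) := Quotient.countable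
      haveI : Countable (G →* (G ⧸ N0.1)) := by
        have : Function.Injective
            (fun (f : G →* (G ⧸ N0.1)) (x : T) => f x) := by
          intro f g hfg
          refine MonoidHom.eq_of_eqOn_dense hTc ?_
          intro x hx
          exact congrFun hfg ⟨x, hx⟩
        exact this.countable
      set Φ : {N : 𝒮 // Quot.mk r N = Quot.mk r N0} → (G →* (G ⧸ N0.1)) :=
        fun N =>
          letI : (N.1.1).Normal := hnorm N.1.1 N.1.2
          letI e : (G ⧸ N.1.1) ≃* (G ⧸ N0.1) :=
            Classical.choice ((hequiv.eqvGen_iff).mp (Quot.eqvGen_exact N.2))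
          e.toMonoidHom.comp (QuotientGroup.mk' N.1.1) with hΦ
      have hker : ∀ N, (Φ N).ker = N.1.1 := by
        intro N
        letI : (N.1.1).Normal := hnorm N.1.1 N.1.2
        rw [hΦ]
        simp only
        rw [← MonoidHom.comap_ker]
        have : (MonoidHom.ker ((Classical.choice ((hequiv.eqvGen_iff).mp
            (Quot.eqvGen_exact N.2)) : (G ⧸ N.1.1) ≃* (G ⧸ N0.1)).toMonoidHom)) = ⊥ := by
          rw [MonoidHom.ker_eq_bot_iff]
          exact MulEquiv.injective _
        rw [this]
        rw [(QuotientGroup.mk' N.1.1).comap_bot, QuotientGroup.ker_mk']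
      have hΦinj : Function.Injective Φ := by
        intro N M hNM
        have : N.1.1 = M.1.1 := by rw [← hker N, ← hker M, hNM]
        exact Subtype.ext (Subtype.ext this)
      exact hΦinj.countable
    exact Countable.of_equiv _ (Equiv.sigmaFiberEquiv (Quot.mk r))
  · intro h
    rw [← not_countable_iff]
    intro hS
    exact not_countable_iff.mpr h inferInstance
end
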